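/- arXiv:2107.12871 — 5 statements merged into one kernel-verified Lean document; each statement's English description precedes it below -/
import Mathlib

section
/- Let f : ℝⁿ × ℝᵐ → ℝⁿ be the dynamics of a discrete-time control system, ρ : ℝⁿ → ℝ a safety function bounded below, and γ : ℝⁿ → U an evasive maneuver. Define T(x) = f(x, γ(x)) and h(x) = inf_{k ≥ 0} ρ(T^k(x)). Then for every x with h(x) ≥ 0 and every λ ∈ [0,1], the control γ(x) satisfies the barrier constraint: h(f(x, γ(x))) − h(x) + λ·h(x) ≥ 0. In particular γ(x) ∈ K(x) for all x ∈ C, so h is a discrete-time exponential control barrier function on C = {x : h(x) ≥ 0}. -/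
/-- Theorem 1 of the paper: the worst-case safety value along the evasive
maneuver trajectory, `h x = ⨅ k, ρ (T^[k] x)` with `T x = f x (γ x)`, is a
DT-ECBF on `C = {x : h x ≥ 0}`: the evasive maneuver itself satisfies the
barrier constraint at every safe state, for every `λ ∈ [0,1]`. -/
theorem evasive_maneuver_is_dt_ecbf
    {n m : ℕ}
    (f : (Fin n → ℝ) → (Fin m → ℝ) → (Fin n → ℝ))
    (ρ : (Fin n → ℝ) → ℝ)
    (hbdd : ∃ B, ∀ y, B ≤ ρ y)
    (U : Set (Fin m → ℝ))
    (γ : (Fin n → ℝ) → (Fin m → ℝ))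
    (hγU : ∀ x, γ x ∈ U)
    (T : (Fin n → ℝ) → (Fin n → ℝ))
    (hT : ∀ x, T x = f x (γ x))
    (h : (Fin n → ℝ) → ℝ)
    (hh : ∀ x, h x = ⨅ k : ℕ, ρ (T^[k] x)) :
    ∀ x, 0 ≤ h x → ∀ lam : ℝ, 0 ≤ lam → lam ≤ 1 →
      h (f x (γ x)) - h x + lam * h x ≥ 0 := by
  intro x hx lam hlam0 _
  obtain ⟨B, hB⟩ := hbdd
  have hbdd' : BddBelow (Set.range fun k : ℕ => ρ (T^[k] x)) :=
    ⟨B, by rintro _ ⟨k, rfl⟩; exact hB _⟩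
  have key : h x ≤ h (f x (γ x)) := by
    rw [hh x, hh (f x (γ x)), ← hT x]
    refine le_ciInf fun k => ?_
    rw [show T^[k] (T x) = T^[k + 1] x from (Function.iterate_succ_apply T k x).symm]
    exact ciInf_le hbdd' (k + 1)
  have : lam * h x ≥ 0 := mul_nonneg hlam0 hx
  linarith
end

section
/- Let f : ℝⁿ × ℝᵐ → ℝⁿ be the dynamics of a discrete-time control system, ρ : ℝⁿ → ℝ a safety function bounded below, γ : ℝⁿ → U an evasive maneuver, and h(x) = inf_{k ≥ 0} ρ(T^k(x)) where T(x) = f(x, γ(x)), with safe set C = {x : h(x) ≥ 0}. Let λ ∈ [0,1] and let γ¹ : ℝⁿ → U be a second feedback map such that for every x with h(x) ≥ 0, h(f(x, γ¹(x))) − h(x) + λ·h(x) ≥ 0 (i.e. γ¹(x) ∈ K(x) on C). Define h¹(x₀) = inf_{k ≥ 0} ρ(T₁^k(x₀)) where T₁(x) = f(x, γ¹(x)), with safe set C¹ = {x : h¹(x) ≥ 0}. Then C ⊆ C¹: for every x₀ with h(x₀) ≥ 0, one has h¹(x₀) ≥ 0. -/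
/-- Theorem 2 of the paper: if `γ¹` is admissible for the barrier function `h`
induced by the evasive maneuver `γ` on its safe set `C`, then the barrier
function `h¹` induced by `γ¹` has a safe set `C¹` containing `C`. -/
theorem expanded_safe_set
    {n m : ℕ}
    (f : (Fin n → ℝ) → (Fin m → ℝ) → (Fin n → ℝ))
    (ρ : (Fin n → ℝ) → ℝ)
    (hbdd : ∃ B, ∀ y, B ≤ ρ y)
    (U : Set (Fin m → ℝ))
    (γ : (Fin n → ℝ) → (Fin m → ℝ))
    (hγU : ∀ x, γ x ∈ U)
    (T : (Fin n → ℝ) → (Fin n → ℝ))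
    (hT : ∀ x, T x = f x (γ x))
    (h : (Fin n → ℝ) → ℝ)
    (hh : ∀ x, h x = ⨅ k : ℕ, ρ (T^[k] x))
    (lam : ℝ) (hlam0 : 0 ≤ lam) (hlam1 : lam ≤ 1)
    (γ₁ : (Fin n → ℝ) → (Fin m → ℝ))
    (hγ₁U : ∀ x, γ₁ x ∈ U)
    (hγ₁adm : ∀ x, 0 ≤ h x → h (f x (γ₁ x)) - h x + lam * h x ≥ 0)
    (T₁ : (Fin n → ℝ) → (Fin n → ℝ))
    (hT₁ : ∀ x, T₁ x = f x (γ₁ x))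
    (h₁ : (Fin n → ℝ) → ℝ)
    (hh₁ : ∀ x, h₁ x = ⨅ k : ℕ, ρ (T₁^[k] x)) :
    ∀ x₀, 0 ≤ h x₀ → 0 ≤ h₁ x₀ := by
  intro x₀ hx₀
  obtain ⟨B, hB⟩ := hbdd
  -- h x ≤ ρ x
  have hle : ∀ x, h x ≤ ρ x := by
    intro x
    rw [hh x]
    have : BddBelow (Set.range fun k : ℕ => ρ (T^[k] x)) := by
      refine ⟨B, ?_⟩
      rintro y ⟨k, rfl⟩
      exact hB _
    simpa using ciInf_le this 0
  -- h stays nonneg along T₁ iterates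
  have key : ∀ k, 0 ≤ h (T₁^[k] x₀) := by
    intro k
    induction k with
    | zero => simpa using hx₀
    | succ k ih =>
      rw [Function.iterate_succ_apply']
      have := hγ₁adm (T₁^[k] x₀) ih
      have h1 : (1 - lam) * h (T₁^[k] x₀) ≤ h (f (T₁^[k] x₀) (γ₁ (T₁^[k] x₀))) := by
        nlinarith
      have h2 : 0 ≤ (1 - lam) * h (T₁^[k] x₀) :=
        mul_nonneg (by linarith) ih
      rw [hT₁]
      linarith
  rw [hh₁ x₀]
  refine le_ciInf fun k => ?_
  exact le_trans (key k) (hle _)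
end

section
/- Let f : ℝⁿ × ℝᵐ → ℝⁿ be the dynamics of a discrete-time control system, ρ : ℝⁿ → ℝ a safety function bounded below, γ : ℝⁿ → U an evasive maneuver, and h(x) = inf_{k ≥ 0} ρ(T^k(x)) where T(x) = f(x, γ(x)). Let λ ∈ [0,1] and let γ¹ : ℝⁿ → U satisfy h(f(x, γ¹(x))) − h(x) + λ·h(x) ≥ 0 for every x with h(x) ≥ 0. Then for every x₀ with h(x₀) ≥ 0, the trajectory x̂_0 = x₀, x̂_{k+1} = f(x̂_k, γ¹(x̂_k)) satisfies ρ(x̂_k) ≥ 0 for every k ≥ 0. -/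
/-- If `γ¹` is admissible for the evasive-maneuver barrier function `h` on its
safe set, then the trajectory generated by `γ¹` from any state in the safe set
is pointwise safe for all time. -/
theorem gamma_one_trajectory_pointwise_safe
    {n m : ℕ}
    (f : (Fin n → ℝ) → (Fin m → ℝ) → (Fin n → ℝ))
    (ρ : (Fin n → ℝ) → ℝ)
    (hbdd : ∃ B, ∀ y, B ≤ ρ y)
    (U : Set (Fin m → ℝ))
    (γ : (Fin n → ℝ) → (Fin m → ℝ))
    (hγU : ∀ x, γ x ∈ U)
    (T : (Fin n → ℝ) → (Fin n → ℝ))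
    (hT : ∀ x, T x = f x (γ x))
    (h : (Fin n → ℝ) → ℝ)
    (hh : ∀ x, h x = ⨅ k : ℕ, ρ (T^[k] x))
    (lam : ℝ) (hlam0 : 0 ≤ lam) (hlam1 : lam ≤ 1)
    (γ₁ : (Fin n → ℝ) → (Fin m → ℝ))
    (hγ₁U : ∀ x, γ₁ x ∈ U)
    (hγ₁adm : ∀ x, 0 ≤ h x → h (f x (γ₁ x)) - h x + lam * h x ≥ 0) :
    ∀ x₀, 0 ≤ h x₀ →
      ∀ xhat : ℕ → (Fin n → ℝ),
        xhat 0 = x₀ →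
        (∀ k, xhat (k + 1) = f (xhat k) (γ₁ (xhat k))) →
        ∀ k, 0 ≤ ρ (xhat k) := by
  intro x₀ hx0 xhat h0 hstep k
  obtain ⟨B, hB⟩ := hbdd
  have hle : ∀ x, h x ≤ ρ x := by
    intro x
    rw [hh]
    have : BddBelow (Set.range fun k : ℕ => ρ (T^[k] x)) :=
      ⟨B, by rintro _ ⟨j, rfl⟩; exact hB _⟩
    simpa using ciInf_le this 0
  have hpos : ∀ j, 0 ≤ h (xhat j) := by
    intro j
    induction j with
    | zero => rwa [h0]
    | succ j ih =>
      have := hγ₁adm (xhat j) ih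
      rw [hstep j]
      nlinarith [this]
  exact le_trans (hpos k) (hle (xhat k))
end

section
/- Consider two fixed-wing vehicles at the same altitude moving on a common line under the straight-line evasive maneuver γ_straight (zero turn rate, zero climb rate, constant speeds v₁, v₂ > 0, time step Δt > 0): vehicle 1 starts at the origin heading in the +x direction and vehicle 2 starts at (d₀, 0) heading in the −x direction, so their planar positions at step k are p₁(k) = (k·v₁·Δt, 0) and p₂(k) = (d₀ − k·v₂·Δt, 0). Let ρ(x_k) = ‖p₁(k) − p₂(k)‖ − D_s with safety distance D_s > 0. If the initial separation is d₀ = m·(v₁ + v₂)·Δt for some m ∈ ℕ, then inf_{k ≥ 0} ρ(x_k) = −D_s (the vehicles coincide at step m and the distance is always nonnegative). Consequently, for every R > 0 there exists such an initial configuration with separation d₀ > R whose barrier value h_straight(x₀) = inf_k ρ(x_k) equals −D_s, i.e. head-on configurations are labelled unsafe by h_straight no matter how far apart the vehicles start. -/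
/-- Example 1 of the paper: two fixed-wing vehicles heading at each other on a
line, under the straight-line evasive maneuver. Vehicle 1 moves right from the
origin with speed `v₁` and vehicle 2 moves left from `(d₀, 0)` with speed
`v₂`. If `d₀ = m (v₁ + v₂) Δt` then the barrier value
`⨅ k, (‖p₁ k - p₂ k‖ - D_s)` equals `-D_s`; consequently for every `R > 0`
there is such an initial separation `d₀ > R` whose barrier value is `-D_s`. -/
theorem head_on_always_unsafe_for_h_straight
    (v₁ v₂ Δt Ds : ℝ)
    (hv₁ : 0 < v₁) (hv₂ : 0 < v₂) (hΔt : 0 < Δt) (hDs : 0 < Ds)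
    (p₁ p₂ : ℝ → ℕ → EuclideanSpace ℝ (Fin 2))
    (hp₁0 : ∀ d₀ k, p₁ d₀ k 0 = (k : ℝ) * v₁ * Δt)
    (hp₁1 : ∀ d₀ k, p₁ d₀ k 1 = 0)
    (hp₂0 : ∀ d₀ k, p₂ d₀ k 0 = d₀ - (k : ℝ) * v₂ * Δt)
    (hp₂1 : ∀ d₀ k, p₂ d₀ k 1 = 0) :
    (∀ M : ℕ,
      (⨅ k : ℕ, (‖p₁ ((M : ℝ) * (v₁ + v₂) * Δt) k
          - p₂ ((M : ℝ) * (v₁ + v₂) * Δt) k‖ - Ds)) = -Ds ∧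
      p₁ ((M : ℝ) * (v₁ + v₂) * Δt) M = p₂ ((M : ℝ) * (v₁ + v₂) * Δt) M ∧
      ∀ k : ℕ, 0 ≤ ‖p₁ ((M : ℝ) * (v₁ + v₂) * Δt) k
          - p₂ ((M : ℝ) * (v₁ + v₂) * Δt) k‖) ∧
    (∀ R : ℝ, 0 < R → ∃ d₀ : ℝ, R < d₀ ∧ (∃ M : ℕ, d₀ = (M : ℝ) * (v₁ + v₂) * Δt) ∧
      (⨅ k : ℕ, (‖p₁ d₀ k - p₂ d₀ k‖ - Ds)) = -Ds) := by
  have heq : ∀ M : ℕ, p₁ ((M : ℝ) * (v₁ + v₂) * Δt) M = p₂ ((M : ℝ) * (v₁ + v₂) * Δt) M := by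
    intro M
    ext i
    fin_cases i
    · simp [hp₁0, hp₂0]; ring
    · simp [hp₁1, hp₂1]
  have hinf : ∀ M : ℕ,
      (⨅ k : ℕ, (‖p₁ ((M : ℝ) * (v₁ + v₂) * Δt) k
          - p₂ ((M : ℝ) * (v₁ + v₂) * Δt) k‖ - Ds)) = -Ds := by
    intro M
    apply le_antisymm
    · have h := ciInf_le (f := fun k : ℕ => ‖p₁ ((M : ℝ) * (v₁ + v₂) * Δt) k
          - p₂ ((M : ℝ) * (v₁ + v₂) * Δt) k‖ - Ds)
        ⟨-Ds, by rintro x ⟨k, rfl⟩; simp⟩ M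
      simpa [heq M] using h
    · exact le_ciInf fun k => by simp
  refine ⟨fun M => ⟨hinf M, heq M, fun k => norm_nonneg _⟩, fun R hR => ?_⟩
  obtain ⟨M, hM⟩ := exists_nat_gt (R / ((v₁ + v₂) * Δt))
  refine ⟨(M : ℝ) * (v₁ + v₂) * Δt, ?_, ⟨M, rfl⟩, hinf M⟩
  have hc : 0 < (v₁ + v₂) * Δt := by positivity
  calc R = R / ((v₁ + v₂) * Δt) * ((v₁ + v₂) * Δt) := by field_simp
    _ < (M : ℝ) * ((v₁ + v₂) * Δt) := by
        exact mul_lt_mul_of_pos_right hM hc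
    _ = (M : ℝ) * (v₁ + v₂) * Δt := by ring
end

section
/- Let f : ℝⁿ × ℝᵐ → ℝⁿ be the dynamics of a discrete-time control system, ρ : ℝⁿ → ℝ a safety function bounded below, γ : ℝⁿ → U an evasive maneuver, and h(x) = inf_{k ≥ 0} ρ(T^k(x)) where T(x) = f(x, γ(x)). Let λ ∈ [0,1] and let u : ℝⁿ → U be any feedback controller such that for every x with h(x) ≥ 0, h(f(x, u(x))) − h(x) + λ·h(x) ≥ 0 (i.e. u(x) ∈ K(x) on C). Then for every initial state x₀ with h(x₀) ≥ 0, the closed-loop trajectory x_{k+1} = f(x_k, u(x_k)) is pointwise safe for all time: ρ(x_k) ≥ 0 for every k ≥ 0. -/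
/-- Main safety guarantee: if `h` is the barrier function induced by the
evasive maneuver `γ` and the feedback controller `u` is admissible for `h` on
`C = {x : h x ≥ 0}`, then every closed-loop trajectory starting in `C` is
pointwise safe for all time: `ρ (x k) ≥ 0` for every `k`. -/
theorem closed_loop_pointwise_safety
    {n m : ℕ}
    (f : (Fin n → ℝ) → (Fin m → ℝ) → (Fin n → ℝ))
    (ρ : (Fin n → ℝ) → ℝ)
    (hbdd : ∃ B, ∀ y, B ≤ ρ y)
    (U : Set (Fin m → ℝ))
    (γ : (Fin n → ℝ) → (Fin m → ℝ))
    (hγU : ∀ x, γ x ∈ U)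
    (T : (Fin n → ℝ) → (Fin n → ℝ))
    (hT : ∀ x, T x = f x (γ x))
    (h : (Fin n → ℝ) → ℝ)
    (hh : ∀ x, h x = ⨅ k : ℕ, ρ (T^[k] x))
    (lam : ℝ) (hlam0 : 0 ≤ lam) (hlam1 : lam ≤ 1)
    (u : (Fin n → ℝ) → (Fin m → ℝ))
    (huU : ∀ x, u x ∈ U)
    (hadm : ∀ x, 0 ≤ h x → h (f x (u x)) - h x + lam * h x ≥ 0) :
    ∀ x₀, 0 ≤ h x₀ →
      ∀ xs : ℕ → (Fin n → ℝ),
        xs 0 = x₀ →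
        (∀ k, xs (k + 1) = f (xs k) (u (xs k))) →
        ∀ k, 0 ≤ ρ (xs k) := by
  intro x₀ hx₀ xs hxs0 hxsS k
  obtain ⟨B, hB⟩ := hbdd
  have hinv : ∀ k, 0 ≤ h (xs k) := by
    intro k
    induction k with
    | zero => rw [hxs0]; exact hx₀
    | succ k ih =>
      have := hadm (xs k) ih
      rw [hxsS k]
      nlinarith [this]
  have hle : h (xs k) ≤ ρ (xs k) := by
    rw [hh]
    have : ρ (xs k) = ρ (T^[0] (xs k)) := rfl
    rw [this]
    exact ciInf_le ⟨B, fun y ⟨j, hj⟩ => hj ▸ hB _⟩ 0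
  linarith [hinv k]
end
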